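/- arXiv:2601.11905 — 4 statements merged into one kernel-verified Lean document; each statement's English description precedes it below -/
import Mathlib

section
/- Let S be a nonempty set and let f, U, L : S → ℝ satisfy L(s) ≤ f(s) ≤ U(s) for all s ∈ S. Let s_B ∈ S satisfy U(s_B) ≥ U(s) for all s ∈ S, let s* ∈ S satisfy f(s*) ≥ f(s) for all s ∈ S, let η > 0 and Δ > 0, and let s_L ∈ S satisfy f(s_L) ≥ f(s*) − η. Define the played decision s := s_L if U(s_B) − L(s_B) > Δ, and s := s_B otherwise. Then the one-step regret satisfies f(s*) − f(s) ≤ max{1, η/Δ} · min{Δ, U(s_B) − L(s_B)}. -/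
/-- Warm-start guarantee of LIBRA (one-step regret): on the event where the
confidence bounds `L ≤ f ≤ U` are valid, with `s_B` the optimistic bandit choice
(maximizer of `U`), `s*` the true optimum, and `s_L` an `η`-suboptimal LLM
recommendation, the decision `s` (the LLM choice when the confidence width
`U(s_B) − L(s_B)` exceeds `Δ`, the bandit choice otherwise) satisfies
`f(s*) − f(s) ≤ max{1, η/Δ} · min{Δ, U(s_B) − L(s_B)}`. -/
theorem libra_warm_start_guarantee
    {S : Type*} [Nonempty S] (f U L : S → ℝ)
    (hbound : ∀ s, L s ≤ f s ∧ f s ≤ U s)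
    (sB : S) (hsB : ∀ s, U s ≤ U sB)
    (sStar : S) (hsStar : ∀ s, f s ≤ f sStar)
    (η Δ : ℝ) (hη : 0 < η) (hΔ : 0 < Δ)
    (sL : S) (hsL : f sStar - η ≤ f sL) :
    f sStar - f (if Δ < U sB - L sB then sL else sB)
      ≤ max 1 (η / Δ) * min Δ (U sB - L sB) := by
  by_cases h : Δ < U sB - L sB
  · rw [if_pos h, min_eq_left h.le]
    have : η / Δ * Δ = η := div_mul_cancel₀ η hΔ.ne'
    calc f sStar - f sL ≤ η := by linarith
      _ = η / Δ * Δ := this.symm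
      _ ≤ max 1 (η / Δ) * Δ := by
          apply mul_le_mul_of_nonneg_right (le_max_right _ _) hΔ.le
  · rw [if_neg h]
    push_neg at h
    rw [min_eq_right h]
    have h1 := hbound sStar
    have h2 := hbound sB
    have h3 := hsB sStar
    calc f sStar - f sB ≤ U sB - L sB := by linarith
      _ = 1 * (U sB - L sB) := (one_mul _).symm
      _ ≤ max 1 (η / Δ) * (U sB - L sB) := by
          apply mul_le_mul_of_nonneg_right (le_max_left _ _); linarith
end

section
/- Let T ≥ 1, η > 0, Δ > 0. For each t ∈ {1,…,T}, let S_t be a nonempty set and f_t, U_t, L_t : S_t → ℝ satisfy L_t(s) ≤ f_t(s) ≤ U_t(s) for all s ∈ S_t; let s_t^B maximize U_t over S_t, let s_t^* maximize f_t over S_t, and let s_t^L ∈ S_t satisfy f_t(s_t^L) ≥ f_t(s_t^*) − η. Define the played decision s_t := s_t^L if U_t(s_t^B) − L_t(s_t^B) > Δ and s_t := s_t^B otherwise. Then the cumulative regret satisfies ∑_{t=1}^T (f_t(s_t^*) − f_t(s_t)) ≤ max{1, η/Δ} · min{ Δ·T , ∑_{t=1}^T (U_t(s_t^B) − L_t(s_t^B))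 }. -/
/-- Improvement guarantee of LIBRA (deterministic core): over `T` rounds with valid
confidence bounds `L_t ≤ f_t ≤ U_t`, optimistic bandit choices `s_t^B`, optima `s_t^*`,
and `η`-suboptimal LLM recommendations `s_t^L`, the algorithm (playing the LLM choice
exactly when the confidence width exceeds `Δ`) has cumulative regret at most
`max{1, η/Δ} · min{Δ·T, ∑_t (U_t(s_t^B) − L_t(s_t^B))}`. -/
theorem libra_improvement_guarantee
    (T : ℕ) (hT : 1 ≤ T) (η Δ : ℝ) (hη : 0 < η) (hΔ : 0 < Δ)
    (σ : Fin T → Type*) [∀ t, Nonempty (σ t)]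
    (f U L : ∀ t, σ t → ℝ)
    (hbound : ∀ t s, L t s ≤ f t s ∧ f t s ≤ U t s)
    (sB : ∀ t, σ t) (hsB : ∀ t s, U t s ≤ U t (sB t))
    (sStar : ∀ t, σ t) (hsStar : ∀ t s, f t s ≤ f t (sStar t))
    (sL : ∀ t, σ t) (hsL : ∀ t, f t (sStar t) - η ≤ f t (sL t))
    (play : ∀ t, σ t)
    (hplay : ∀ t, play t = if Δ < U t (sB t) - L t (sB t) then sL t else sB t) :
    ∑ t, (f t (sStar t) - f t (play t))
      ≤ max 1 (η / Δ) * min (Δ * T) (∑ t, (U t (sB t) - L t (sB t))) := by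
  set M : ℝ := max 1 (η / Δ) with hM
  have hM1 : (1 : ℝ) ≤ M := le_max_left _ _
  have hMη : η / Δ ≤ M := le_max_right _ _
  have hM0 : 0 ≤ M := le_trans zero_le_one hM1
  -- per-round bounds
  have key : ∀ t, f t (sStar t) - f t (play t) ≤ M * Δ ∧
      f t (sStar t) - f t (play t) ≤ M * (U t (sB t) - L t (sB t)) := by
    intro t
    have hw0 : 0 ≤ U t (sB t) - L t (sB t) :=
      sub_nonneg.2 (le_trans (hbound t (sB t)).1 (hbound t (sB t)).2)
    by_cases h : Δ < U t (sB t) - L t (sB t)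
    · have hp : play t = sL t := by rw [hplay t, if_pos h]
      have hr : f t (sStar t) - f t (play t) ≤ η := by
        rw [hp]; linarith [hsL t]
      constructor
      · have : η ≤ M * Δ := by
          have := (div_le_iff₀ hΔ).1 hMη
          linarith
        linarith
      · have h1 : η ≤ M * Δ := by
          have := (div_le_iff₀ hΔ).1 hMη
          linarith
        have h2 : M * Δ ≤ M * (U t (sB t) - L t (sB t)) :=
          mul_le_mul_of_nonneg_left (le_of_lt h) hM0
        linarith
    · have hp : play t = sB t := by rw [hplay t, if_neg h]
      push_neg at h
      have hr : f t (sStar t) - f t (play t) ≤ U t (sB t) - L t (sB t) := by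
        rw [hp]
        have h1 : f t (sStar t) ≤ U t (sStar t) := (hbound t (sStar t)).2
        have h2 : U t (sStar t) ≤ U t (sB t) := hsB t (sStar t)
        have h3 : L t (sB t) ≤ f t (sB t) := (hbound t (sB t)).1
        linarith
      constructor
      · calc f t (sStar t) - f t (play t) ≤ U t (sB t) - L t (sB t) := hr
          _ ≤ Δ := h
          _ = 1 * Δ := (one_mul Δ).symm
          _ ≤ M * Δ := mul_le_mul_of_nonneg_right hM1 hΔ.le
      · calc f t (sStar t) - f t (play t) ≤ U t (sB t) - L t (sB t) := hr
          _ = 1 * (U t (sB t) - L t (sB t)) := (one_mul _).symm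
          _ ≤ M * (U t (sB t) - L t (sB t)) := mul_le_mul_of_nonneg_right hM1 hw0
  rw [mul_min_of_nonneg _ _ hM0]
  refine le_min ?_ ?_
  · calc ∑ t, (f t (sStar t) - f t (play t)) ≤ ∑ _t : Fin T, M * Δ :=
        Finset.sum_le_sum fun t _ => (key t).1
      _ = (T : ℝ) * (M * Δ) := by simp [Finset.sum_const]
      _ = M * (Δ * T) := by ring
  · calc ∑ t, (f t (sStar t) - f t (play t))
        ≤ ∑ t, M * (U t (sB t) - L t (sB t)) :=
        Finset.sum_le_sum fun t _ => (key t).2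
      _ = M * ∑ t, (U t (sB t) - L t (sB t)) := by rw [Finset.mul_sum]
end

section
/- Fix integers d, K, T ≥ 1 and reals λ > 0, β > 0, L > 0, ρ > 0, Δ > 0 with Δ ≤ 2Lρ. Let x_1,…,x_T ∈ ℝ^d satisfy ‖x_t‖₂ ≤ β for all t, let a_1,…,a_T ∈ {1,…,K}, and for each t and each arm a define V_{t,a} := λ·I_d + ∑_{s<t, a_s=a} x_s x_sᵀ. Then the number of rounds t ∈ {1,…,T} for which 2Lρ·‖x_t‖_{V_{t,a_t}⁻¹} > Δ is at most (8L²ρ²/Δ²) · d·K · log(1 + β²T/(λ·d·K)). -/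
/-- Euclidean dot product on `ℝ^d`. -/
def dotp {d : ℕ} (v w : Fin d → ℝ) : ℝ := ∑ i, v i * w i

/-- Euclidean norm on `ℝ^d`. -/
noncomputable def norm2 {d : ℕ} (u : Fin d → ℝ) : ℝ := Real.sqrt (∑ i, u i ^ 2)

/-- The Mahalanobis-type norm `‖u‖_V = √(uᵀ V u)` associated with a matrix `V`. -/
noncomputable def normV {d : ℕ} (V : Matrix (Fin d) (Fin d) ℝ) (u : Fin d → ℝ) : ℝ :=
  Real.sqrt (dotp u (V.mulVec u))

/-- The per-arm regularized design matrix
`V_{t,a} = λ·I_d + ∑_{s < t, a_s = a} x_s x_sᵀ`. -/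
noncomputable def design {d T K : ℕ} (lam : ℝ) (x : Fin T → Fin d → ℝ)
    (a : Fin T → Fin K) (t : Fin T) (b : Fin K) : Matrix (Fin d) (Fin d) ℝ :=
  lam • (1 : Matrix (Fin d) (Fin d) ℝ) +
    ∑ s ∈ Finset.univ.filter (fun s : Fin T => s < t ∧ a s = b),
      Matrix.vecMulVec (x s) (x s)

/-!
Let `q_t = x_tᵀ V_{t,a_t}⁻¹ x_t`. By the matrix determinant lemma, adding round `t` multiplies
`det V_{a_t}` by `1 + q_t` and leaves the other arms alone, so `∑_t log (1 + q_t)` telescopes to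
`∑_b log det V_b - dK log λ` for the final design matrices. Bounding every eigenvalue `μ` of every
arm by `log μ ≤ log c + μ / c - 1` with `c = λ + β²T / (dK)`, and using that the traces add up to
at most `dKλ + β²T = dK c`, gives `∑_b log det V_b ≤ dK log c`; this one step replaces AM–GM
within an arm and Jensen across arms. A counted round has `q_t > ε := (Δ / 2Lρ)²` with `ε ≤ 1`, and
`min q 1 ≤ 2 log (1 + q)`, so it contributes at least `ε / 2` to the potential.
-/

open Matrix Finset

namespace Matrix

variable {n : Type*} [Fintype n] [DecidableEq n]

theorem det_add_vecMulVec {α : Type*} [CommRing α] {A : Matrix n n α} (hA : IsUnit A.det)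
    (u v : n → α) : (A + vecMulVec u v).det = A.det * (1 + v ⬝ᵥ (A⁻¹ *ᵥ u)) := by
  rw [vecMulVec_eq Unit, det_add_replicateCol_mul_replicateRow hA, Matrix.mul_assoc,
    ← replicateCol_mulVec]
  simp [det_unique, replicateRow_mul_replicateCol_apply]

theorem PosDef.log_det_le {A : Matrix n n ℝ} (hA : A.PosDef) {c : ℝ} (hc : 0 < c) :
    Real.log A.det ≤ Fintype.card n * (Real.log c - 1) + A.trace / c := by
  have hlog_eig (i : n) :
      Real.log (hA.1.eigenvalues i) ≤ Real.log c - 1 + hA.1.eigenvalues i / c := by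
    have hμ := hA.eigenvalues_pos i
    have := Real.log_le_sub_one_of_pos (div_pos hμ hc)
    rw [Real.log_div hμ.ne' hc.ne'] at this
    linarith
  have hdet : A.det = ∏ i, hA.1.eigenvalues i := by simpa using hA.1.det_eq_prod_eigenvalues
  have htr : A.trace = ∑ i, hA.1.eigenvalues i := by simpa using hA.1.trace_eq_sum_eigenvalues
  calc Real.log A.det = ∑ i, Real.log (hA.1.eigenvalues i) := by
        rw [hdet, Real.log_prod fun i _ => (hA.eigenvalues_pos i).ne']
    _ ≤ ∑ i, (Real.log c - 1 + hA.1.eigenvalues i / c) := sum_le_sum fun i _ => hlog_eig i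
    _ = Fintype.card n * (Real.log c - 1) + A.trace / c := by
      rw [sum_add_distrib, ← sum_div, htr, sum_const, card_univ, nsmul_eq_mul]

end Matrix

theorem min_le_two_mul_log_one_add {u : ℝ} (hu : 0 ≤ u) : min u 1 ≤ 2 * Real.log (1 + u) := by
  have hlog := Real.one_sub_inv_le_log_of_pos (by linarith : 0 < 1 + u)
  have hfrac : 1 - (1 + u)⁻¹ = u / (1 + u) := by field_simp; ring
  have hmin : min u 1 ≤ 2 * (u / (1 + u)) := by
    rw [mul_div_assoc', le_div_iff₀ (by linarith)]
    rcases le_total u 1 with h | h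
    · rw [min_eq_left h]; nlinarith
    · rw [min_eq_right h]; linarith
  linarith

theorem card_mul_le_two_mul_sum_log_one_add {τ : Type*} {s u : Finset τ} (hsu : s ⊆ u)
    {q : τ → ℝ} (hq : ∀ t ∈ u, 0 ≤ q t) {ε : ℝ} (hε : ε ≤ 1) (hεq : ∀ t ∈ s, ε < q t) :
    #s * ε ≤ 2 * ∑ t ∈ u, Real.log (1 + q t) := by
  calc #s * ε = ∑ t ∈ s, ε := by rw [sum_const, nsmul_eq_mul]
    _ ≤ ∑ t ∈ s, 2 * Real.log (1 + q t) := sum_le_sum fun t ht =>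
        (le_min (hεq t ht).le hε).trans (min_le_two_mul_log_one_add (hq t (hsu ht)))
    _ ≤ ∑ t ∈ u, 2 * Real.log (1 + q t) := sum_le_sum_of_subset_of_nonneg hsu
        fun t ht _ => mul_nonneg zero_le_two (Real.log_nonneg (by linarith [hq t ht]))
    _ = 2 * ∑ t ∈ u, Real.log (1 + q t) := by rw [mul_sum]

section ArmGram

variable {n τ ι : Type*} [DecidableEq n] [DecidableEq ι]

noncomputable def armGram (lam : ℝ) (x : τ → n → ℝ) (a : τ → ι) (S : Finset τ) (b : ι) :
    Matrix n n ℝ :=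
  lam • 1 + ∑ s ∈ S with a s = b, vecMulVec (x s) (x s)

variable {lam : ℝ} {x : τ → n → ℝ} {a : τ → ι}

theorem posDef_armGram [Fintype n] (hlam : 0 < lam) (S : Finset τ) (b : ι) :
    (armGram lam x a S b).PosDef :=
  (PosDef.one.smul hlam).add_posSemidef <| posSemidef_sum _ fun s _ => by
    simpa using posSemidef_vecMulVec_self_star (x s)

theorem armGram_empty (b : ι) : armGram lam x a ∅ b = lam • 1 := by
  simp [armGram]

theorem armGram_insert [DecidableEq τ] {S : Finset τ} {t : τ} (ht : t ∉ S) (b : ι) :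
    armGram lam x a (insert t S) b =
      armGram lam x a S b + if a t = b then vecMulVec (x t) (x t) else 0 := by
  unfold armGram
  rw [filter_insert]
  split_ifs with h
  · rw [sum_insert (by simp [ht])]
    abel
  · rw [add_zero]

theorem sum_trace_armGram [Fintype n] [Fintype ι] (S : Finset τ) :
    ∑ b, (armGram lam x a S b).trace =
      Fintype.card ι * Fintype.card n * lam + ∑ s ∈ S, x s ⬝ᵥ x s := by
  simp only [armGram, trace_add, trace_smul, trace_one, trace_sum, trace_vecMulVec,
    sum_add_distrib, sum_fiberwise]
  simp [mul_comm, mul_assoc]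

end ArmGram

section Leverage

variable {n τ ι : Type*} [Fintype n] [DecidableEq n] [LinearOrder τ] [DecidableEq ι]
  {lam : ℝ} {x : τ → n → ℝ} {a : τ → ι}

noncomputable def armLeverage (lam : ℝ) (x : τ → n → ℝ) (a : τ → ι) (S : Finset τ) (t : τ) :
    ℝ :=
  x t ⬝ᵥ ((armGram lam x a {s ∈ S | s < t} (a t))⁻¹ *ᵥ x t)

theorem armLeverage_nonneg (hlam : 0 < lam) (S : Finset τ) (t : τ) :
    0 ≤ armLeverage lam x a S t := by
  simpa [armLeverage] using
    (posDef_armGram hlam _ (a t)).inv.posSemidef.dotProduct_mulVec_nonneg (x t)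

theorem log_det_armGram_insert (hlam : 0 < lam) {S : Finset τ} {t : τ} (ht : ∀ s ∈ S, s < t)
    (b : ι) :
    Real.log (armGram lam x a (insert t S) b).det = Real.log (armGram lam x a S b).det +
      if a t = b then Real.log (1 + armLeverage lam x a (insert t S) t) else 0 := by
  have hS : {s ∈ insert t S | s < t} = S := by
    rw [filter_insert, if_neg (lt_irrefl t), filter_true_of_mem ht]
  rw [armGram_insert fun h => (ht t h).false]
  split_ifs with h
  · subst h
    have hpd := posDef_armGram (x := x) (a := a) hlam S (a t)
    have hlev := armLeverage_nonneg (x := x) (a := a) hlam (insert t S) t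
    rw [armLeverage, hS] at hlev ⊢
    rw [det_add_vecMulVec (isUnit_iff_ne_zero.mpr hpd.det_pos.ne'),
      Real.log_mul hpd.det_pos.ne' (by positivity)]
  · rw [add_zero, add_zero]

theorem sum_log_det_armGram [Fintype ι] (hlam : 0 < lam) (S : Finset τ) :
    ∑ b, Real.log (armGram lam x a S b).det =
      Fintype.card ι * (Fintype.card n * Real.log lam) +
        ∑ t ∈ S, Real.log (1 + armLeverage lam x a S t) := by
  induction S using Finset.induction_on_max with
  | empty => simp [armGram_empty, Real.log_pow]
  | insert t S ht ih =>
    have hlev : ∑ s ∈ S, Real.log (1 + armLeverage lam x a (insert t S) s) =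
        ∑ s ∈ S, Real.log (1 + armLeverage lam x a S s) :=
      sum_congr rfl fun s hs => by
        rw [armLeverage, armLeverage, filter_insert, if_neg (ht s hs).not_gt]
    rw [sum_congr rfl fun b _ => log_det_armGram_insert hlam ht b, sum_add_distrib, ih,
      sum_ite_eq, if_pos (mem_univ _), sum_insert fun h => (ht t h).false, hlev]
    ring

theorem sum_log_one_add_armLeverage_le [Fintype ι] (hlam : 0 < lam)
    (hN : 0 < Fintype.card n * Fintype.card ι) {S : Finset τ} {B : ℝ}
    (hB : ∑ s ∈ S, x s ⬝ᵥ x s ≤ B) :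
    ∑ t ∈ S, Real.log (1 + armLeverage lam x a S t) ≤
      Fintype.card n * Fintype.card ι *
        Real.log (1 + B / (lam * Fintype.card n * Fintype.card ι)) := by
  set N : ℝ := Fintype.card n * Fintype.card ι with hN_def
  have hNpos : 0 < N := by rw [hN_def]; exact_mod_cast hN
  have hB0 : 0 ≤ B :=
    (sum_nonneg fun s _ => by simpa using dotProduct_self_star_nonneg (x s)).trans hB
  set c := lam + B / N with hc_def
  have hc : 0 < c := by positivity
  have hlog_c : Real.log c = Real.log lam + Real.log (1 + B / (lam * N)) := by
    rw [← Real.log_mul hlam.ne' (by positivity), hc_def]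
    field_simp
  have htrace : (∑ b, (armGram lam x a S b).trace) / c ≤ N := by
    rw [sum_trace_armGram, div_le_iff₀ hc, hc_def, mul_add, mul_div_cancel₀ _ hNpos.ne']
    linarith
  have hdet : ∑ b, Real.log (armGram lam x a S b).det ≤ N * (Real.log c - 1) + N := by
    calc ∑ b, Real.log (armGram lam x a S b).det
        ≤ ∑ b, (Fintype.card n * (Real.log c - 1) + (armGram lam x a S b).trace / c) :=
          sum_le_sum fun b _ => (posDef_armGram hlam S b).log_det_le hc
      _ = N * (Real.log c - 1) + (∑ b, (armGram lam x a S b).trace) / c := by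
          rw [sum_add_distrib, ← sum_div, sum_const, card_univ, nsmul_eq_mul, hN_def]
          ring
      _ ≤ N * (Real.log c - 1) + N := by linarith
  rw [sum_log_det_armGram hlam S, hlog_c] at hdet
  rw [mul_assoc lam, ← hN_def]
  linarith

end Leverage

theorem design_eq_armGram {d T K : ℕ} (lam : ℝ) (x : Fin T → Fin d → ℝ) (a : Fin T → Fin K)
    (t : Fin T) (b : Fin K) : design lam x a t b = armGram lam x a {s | s < t} b := by
  rw [design, armGram, filter_filter]

theorem normV_inv_design {d T K : ℕ} (lam : ℝ) (x : Fin T → Fin d → ℝ) (a : Fin T → Fin K)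
    (t : Fin T) : normV (design lam x a t (a t))⁻¹ (x t) = √(armLeverage lam x a univ t) := by
  rw [design_eq_armGram]
  rfl

theorem dotProduct_self_le_sq_of_norm2_le {d : ℕ} {v : Fin d → ℝ} {β : ℝ} (h : norm2 v ≤ β) :
    v ⬝ᵥ v ≤ β ^ 2 := by
  have hsq : v ⬝ᵥ v = norm2 v ^ 2 := by
    rw [norm2, Real.sq_sqrt (by positivity)]
    simp [dotProduct, sq]
  rw [hsq]
  exact pow_le_pow_left₀ (Real.sqrt_nonneg _) h 2

theorem libra_llm_effort_guarantee_general
    (d K T : ℕ) (hd : 1 ≤ d) (hK : 1 ≤ K)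
    (lam β L ρ Δ : ℝ) (hlam : 0 < lam) (hΔ : 0 < Δ) (hΔ2 : Δ ≤ 2 * L * ρ)
    (x : Fin T → Fin d → ℝ) (hx : ∀ t, norm2 (x t) ≤ β)
    (a : Fin T → Fin K) :
    ((Finset.univ.filter
        (fun t : Fin T => Δ < 2 * L * ρ * normV (design lam x a t (a t))⁻¹ (x t))).card : ℝ)
      ≤ (8 * L ^ 2 * ρ ^ 2 / Δ ^ 2) * d * K
          * Real.log (1 + β ^ 2 * T / (lam * d * K)) := by
  have hw : 0 < 2 * L * ρ := hΔ.trans_le hΔ2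
  have hε : (Δ / (2 * L * ρ)) ^ 2 ≤ 1 := pow_le_one₀ (by positivity) ((div_le_one hw).2 hΔ2)
  have hwide : ∀ t ∈ univ.filter
      (fun t : Fin T => Δ < 2 * L * ρ * normV (design lam x a t (a t))⁻¹ (x t)),
      (Δ / (2 * L * ρ)) ^ 2 < armLeverage lam x a univ t := by
    intro t ht
    rwa [mem_filter, normV_inv_design, ← div_lt_iff₀' hw, Real.lt_sqrt (by positivity),
      and_iff_right (mem_univ t)] at ht
  have hcount := card_mul_le_two_mul_sum_log_one_add (subset_univ _)
    (fun t _ => armLeverage_nonneg hlam univ t) hε hwide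
  have hpot := sum_log_one_add_armLeverage_le (a := a) hlam (by simpa using Nat.mul_pos hd hK)
    (S := univ) (B := β ^ 2 * T) <| (sum_le_card_nsmul _ _ _ fun t _ =>
      dotProduct_self_le_sq_of_norm2_le (hx t)).trans_eq (by simp [mul_comm])
  simp only [Fintype.card_fin] at hpot
  have hcoef : 8 * L ^ 2 * ρ ^ 2 / Δ ^ 2 = 2 / (Δ / (2 * L * ρ)) ^ 2 := by
    have hLρ : L * ρ ≠ 0 := by intro h; linarith
    field_simp
    ring
  rw [hcoef, div_mul_eq_mul_div, div_mul_eq_mul_div, div_mul_eq_mul_div,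
    le_div_iff₀ (by positivity)]
  linarith

/-- LLM-effort guarantee (deterministic core): the number of rounds in which the
confidence width `2Lρ·‖x_t‖_{V_{t,a_t}⁻¹}` exceeds the threshold `Δ` (triggering an
LLM query) is at most `(8L²ρ²/Δ²)·d·K·log(1 + β²T/(λdK))`. -/
theorem libra_llm_effort_guarantee
    (d K T : ℕ) (hd : 1 ≤ d) (hK : 1 ≤ K) (hT : 1 ≤ T)
    (lam β L ρ Δ : ℝ) (hlam : 0 < lam) (hβ : 0 < β) (hL : 0 < L)
    (hρ : 0 < ρ) (hΔ : 0 < Δ) (hΔ2 : Δ ≤ 2 * L * ρ)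
    (x : Fin T → Fin d → ℝ) (hx : ∀ t, norm2 (x t) ≤ β)
    (a : Fin T → Fin K) :
    ((Finset.univ.filter
        (fun t : Fin T => Δ < 2 * L * ρ * normV (design lam x a t (a t))⁻¹ (x t))).card : ℝ)
      ≤ (8 * L ^ 2 * ρ ^ 2 / Δ ^ 2) * d * K
          * Real.log (1 + β ^ 2 * T / (lam * d * K)) :=
  libra_llm_effort_guarantee_general d K T hd hK lam β L ρ Δ hlam hΔ hΔ2 x hx a
end

section
/- Fix integers d, K, T ≥ 1 and reals λ > 0, β_X > 0, L_μ > 0, ρ ≥ 1. Let μ : ℝ → ℝ be nondecreasing and L_μ-Lipschitz. For each arm a ∈ {1,…,K} let θ*_a ∈ ℝ^d, and for each round t ∈ {1,…,T} let D_t ⊆ { x ∈ ℝ^d : ‖x‖₂ ≤ β_X } be a nonempty feasible context set with |⟨x, θ*_a⟩| ≤ 1 for all x ∈ D_t and all a. Suppose the algorithm plays (x_t, a_t) with x_t ∈ D_t and a_t ∈ {1,…,K}, define V_{t,a} := λ·I_d + ∑_{s<t, a_s=a} x_s x_sᵀ, and suppose there are estimates θ̂_{t,a} ∈ ℝ^d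 with ‖θ̂_{t,a} − θ*_a‖_{V_{t,a}} ≤ ρ for all t, a, such that each round's choice is optimistic: there exists θ_t with ‖θ_t − θ̂_{t,a_t}‖_{V_{t,a_t}} ≤ ρ and ⟨x_t, θ_t⟩ ≥ ⟨x, θ⟩ for every arm a, every x ∈ D_t, and every θ with ‖θ − θ̂_{t,a}‖_{V_{t,a}} ≤ ρ. Then ∑_{t=1}^T [ max_{a ∈ {1,…,K}, x ∈ D_t} μ(⟨x, θ*_a⟩) − μ(⟨x_t, θ*_{a_t}⟩) ] ≤ 2 L_μ ρ √( 2 d K T · log(1 + β_X² T/(λ d)) ). -/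
/-! Optimism bounds the round-`t` regret by `L_μ ⟨x_t, θ_t - θ*_{a_t}⟩`, and Cauchy–Schwarz in the
geometry of `V = V_{t,a_t}` bounds this gap by `2ρ ‖x_t‖_{V⁻¹}`; as the regret is also at most
`2 L_μ ≤ 2 L_μ ρ` (because `|⟨x, θ*_a⟩| ≤ 1`), it is at most `2 L_μ ρ min(1, ‖x_t‖_{V⁻¹})`.
Cauchy–Schwarz over the rounds leaves `∑_t min(1, ‖x_t‖²_{V⁻¹})`, which splits into one
elliptical potential per arm: each update of `V` multiplies `det V` by `1 + ‖x_t‖²_{V⁻¹}`,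
`min(1, s) ≤ 2 log(1 + s)`, and AM–GM on the eigenvalues bounds `log det V` by
`d log(λ + β_X² T / d)`. -/

open Matrix Finset Real

lemma sum_le_sqrt_card_mul_sum_sq {ι : Type*} [Fintype ι] (f : ι → ℝ) :
    ∑ i, f i ≤ √(Fintype.card ι * ∑ i, f i ^ 2) :=
  (le_abs_self _).trans
    (abs_le_sqrt (by simpa using sq_sum_le_card_mul_sum_sq (s := univ) (f := f)))

section EllipsoidNorm

variable {d : ℕ} {V : Matrix (Fin d) (Fin d) ℝ}

lemma normV_eq_norm (hV : V.PosSemidef) (u : Fin d → ℝ) :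
    normV V u = @Norm.norm _ (V.toSeminormedAddCommGroup hV).toNorm u := by
  rw [normV, dotp, ← dotProduct, dotProduct_comm]
  rfl

lemma normV_add_le (hV : V.PosSemidef) (u w : Fin d → ℝ) :
    normV V (u + w) ≤ normV V u + normV V w := by
  simp only [normV_eq_norm hV]
  exact @norm_add_le _ (V.toSeminormedAddCommGroup hV).toSeminormedAddGroup u w

lemma normV_sub_rev (hV : V.PosSemidef) (u w : Fin d → ℝ) :
    normV V (u - w) = normV V (w - u) := by
  simp only [normV_eq_norm hV]
  exact @norm_sub_rev _ (V.toSeminormedAddCommGroup hV).toSeminormedAddGroup u w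

lemma dotp_mulVec_le_normV_mul_normV (hV : V.PosSemidef) (u w : Fin d → ℝ) :
    dotp u (V *ᵥ w) ≤ normV V u * normV V w := by
  simp only [normV_eq_norm hV]
  convert @real_inner_le_norm _ (V.toSeminormedAddCommGroup hV) (V.toInnerProductSpace hV) u w
    using 1
  rw [dotp, ← dotProduct, dotProduct_comm]
  rfl

lemma dotp_le_normV_inv_mul_normV (hV : V.PosDef) (v u : Fin d → ℝ) :
    dotp v u ≤ normV V⁻¹ v * normV V u := by
  have hVV : V *ᵥ (V⁻¹ *ᵥ v) = v := by
    rw [mulVec_mulVec, mul_nonsing_inv _ (isUnit_iff_ne_zero.mpr hV.det_pos.ne'), one_mulVec]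
  have hnorm : normV V (V⁻¹ *ᵥ v) = normV V⁻¹ v := by
    rw [normV, normV, hVV, dotp, dotp, ← dotProduct, ← dotProduct, dotProduct_comm]
  calc dotp v u = dotp (V⁻¹ *ᵥ v) (V *ᵥ u) := by
        rw [dotp, dotp, ← dotProduct, ← dotProduct, dotProduct_mulVec, ← mulVec_transpose,
          ← conjTranspose_eq_transpose_of_trivial, hV.isHermitian.eq, hVV]
    _ ≤ normV V⁻¹ v * normV V u := hnorm ▸ dotp_mulVec_le_normV_mul_normV hV.posSemidef _ _

lemma sq_normV (hV : V.PosSemidef) (u : Fin d → ℝ) : normV V u ^ 2 = u ⬝ᵥ V *ᵥ u :=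
  sq_sqrt (by simpa using hV.dotProduct_mulVec_nonneg u : 0 ≤ u ⬝ᵥ V *ᵥ u)

lemma normV_nonneg (u : Fin d → ℝ) : 0 ≤ normV V u := sqrt_nonneg _

lemma normV_zero : normV V 0 = 0 := by simp [normV, dotp]

lemma dotp_sub_le_two_mul_normV_inv (hV : V.PosDef) {θ θ' θc : Fin d → ℝ} {ρ : ℝ}
    (hθ : normV V (θ - θc) ≤ ρ) (hθ' : normV V (θ' - θc) ≤ ρ) (x : Fin d → ℝ) :
    dotp x θ - dotp x θ' ≤ 2 * ρ * normV V⁻¹ x := by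
  have hwidth : normV V (θ - θ') ≤ 2 * ρ := by
    calc normV V (θ - θ') = normV V ((θ - θc) + (θc - θ')) := by rw [sub_add_sub_cancel]
      _ ≤ normV V (θ - θc) + normV V (θc - θ') := normV_add_le hV.posSemidef _ _
      _ ≤ 2 * ρ := by rw [normV_sub_rev hV.posSemidef θc]; linarith
  calc dotp x θ - dotp x θ' = dotp x (θ - θ') := (dotProduct_sub x θ θ').symm
    _ ≤ normV V⁻¹ x * normV V (θ - θ') := dotp_le_normV_inv_mul_normV hV x _
    _ ≤ 2 * ρ * normV V⁻¹ x := by nlinarith [normV_nonneg (V := V⁻¹) x]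

end EllipsoidNorm

section EllipticalPotential

variable {d : ℕ}

lemma log_det_add_vecMulVec {V : Matrix (Fin d) (Fin d) ℝ} (hV : V.PosDef) (y : Fin d → ℝ) :
    log (V + vecMulVec y y).det = log V.det + log (1 + normV V⁻¹ y ^ 2) := by
  have hdet : (V + vecMulVec y y).det = V.det * (1 + normV V⁻¹ y ^ 2) := by
    rw [vecMulVec_eq Unit, det_add_replicateCol_mul_replicateRow
      (isUnit_iff_ne_zero.mpr hV.det_pos.ne'), sq_normV hV.inv.posSemidef]
    congr 1
    rw [det_unique]
    simp only [Matrix.add_apply, one_apply_eq, Matrix.mul_assoc]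
    rfl
  rw [hdet, log_mul hV.det_pos.ne' (by positivity)]

lemma min_one_le_two_mul_log_one_add {s : ℝ} (hs : 0 ≤ s) : min 1 s ≤ 2 * log (1 + s) := by
  have hlog : s / (1 + s) ≤ log (1 + s) := by
    calc s / (1 + s) = 1 - (1 + s)⁻¹ := by field_simp; ring
      _ ≤ log (1 + s) := one_sub_inv_le_log_of_pos (by linarith)
  have hmin : min 1 s * (1 + s) ≤ 2 * s := by
    rcases le_total s 1 with h | h
    · rw [min_eq_right h]; nlinarith
    · rw [min_eq_left h]; linarith
  have : min 1 s ≤ 2 * (s / (1 + s)) := by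
    rw [mul_div_assoc', le_div_iff₀ (by linarith)]; exact hmin
  linarith

lemma min_one_sq_le_two_mul_log_one_add_sq {w : ℝ} (hw : 0 ≤ w) :
    min 1 w ^ 2 ≤ 2 * log (1 + w ^ 2) := by
  have : min 1 w ^ 2 = min 1 (w ^ 2) := by
    rcases le_total w 1 with h | h
    · rw [min_eq_right h, min_eq_right (pow_le_one₀ hw h)]
    · rw [min_eq_left h, min_eq_left (one_le_pow₀ h), one_pow]
  exact this ▸ min_one_le_two_mul_log_one_add (sq_nonneg w)

/-- The elliptical potential lemma, in telescoped form. -/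
theorem sum_min_one_normV_inv_sq_le_log_det {N : ℕ} (V : ℕ → Matrix (Fin d) (Fin d) ℝ)
    (y : Fin N → Fin d → ℝ) (hV : ∀ n, (V n).PosDef)
    (hstep : ∀ t : Fin N, V ((t : ℕ) + 1) = V t + vecMulVec (y t) (y t)) :
    ∑ t : Fin N, min 1 (normV (V t)⁻¹ (y t)) ^ 2 ≤ 2 * (log (V N).det - log (V 0).det) := by
  set f : ℕ → ℝ := fun n => log (V n).det
  calc ∑ t : Fin N, min 1 (normV (V t)⁻¹ (y t)) ^ 2 ≤ ∑ t : Fin N, 2 * (f (t + 1) - f t) := by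
        refine sum_le_sum fun t _ => ?_
        rw [show f (t + 1) - f t = log (1 + normV (V t)⁻¹ (y t) ^ 2) by
          simp only [f, hstep, log_det_add_vecMulVec (hV t)]; ring]
        exact min_one_sq_le_two_mul_log_one_add_sq (normV_nonneg _)
    _ = 2 * (f N - f 0) := by
        rw [← mul_sum, Fin.sum_univ_eq_sum_range (fun n => f (n + 1) - f n), sum_range_sub]

/-- AM–GM for the eigenvalues of a positive definite matrix. -/
lemma Matrix.PosDef.log_det_le_card_mul_log_trace_div {n : Type*} [Fintype n] [DecidableEq n]
    {A : Matrix n n ℝ} (hA : A.PosDef) (hn : 0 < Fintype.card n) :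
    log A.det ≤ (Fintype.card n : ℝ) * log (A.trace / Fintype.card n) := by
  set c : ℝ := (Fintype.card n : ℝ)
  have hc : 0 < c := by positivity
  set ev := hA.isHermitian.eigenvalues
  have hev : ∀ i, 0 < ev i := hA.eigenvalues_pos
  have hdet : log A.det = ∑ i, log (ev i) := by
    rw [← log_prod fun i _ => (hev i).ne']
    simpa using congrArg log hA.isHermitian.det_eq_prod_eigenvalues
  have htrace : A.trace = ∑ i, ev i := by simpa using hA.isHermitian.trace_eq_sum_eigenvalues
  have hjensen := strictConcaveOn_log_Ioi.concaveOn.le_map_sum (t := univ) (w := fun _ => c⁻¹)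
    (p := ev) (fun _ _ => by positivity) (by simp [c]; field_simp)
    (fun i _ => Set.mem_Ioi.mpr (hev i))
  simp only [smul_eq_mul, ← mul_sum] at hjensen
  rw [hdet, htrace, div_eq_inv_mul]
  calc ∑ i, log (ev i) = c * (c⁻¹ * ∑ i, log (ev i)) := by field_simp
    _ ≤ c * log (c⁻¹ * ∑ i, ev i) := by gcongr

end EllipticalPotential

section PrefixGram

variable {d T : ℕ}

noncomputable def prefixGram (lam : ℝ) (y : Fin T → Fin d → ℝ) (n : ℕ) :
    Matrix (Fin d) (Fin d) ℝ :=
  lam • 1 + ∑ s ∈ univ.filter (fun s : Fin T => (s : ℕ) < n), vecMulVec (y s) (y s)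

variable {lam : ℝ} {y : Fin T → Fin d → ℝ}

lemma posSemidef_vecMulVec_self (v : Fin d → ℝ) : (vecMulVec v v).PosSemidef := by
  simpa using posSemidef_vecMulVec_self_star v

lemma prefixGram_posDef (hlam : 0 < lam) (y : Fin T → Fin d → ℝ) (n : ℕ) :
    (prefixGram lam y n).PosDef := by
  refine PosDef.add_posSemidef ?_ (posSemidef_sum _ fun s _ => posSemidef_vecMulVec_self (y s))
  rw [smul_one_eq_diagonal]
  exact PosDef.diagonal fun _ => hlam

lemma prefixGram_zero : prefixGram lam y 0 = lam • 1 := by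
  simp [prefixGram]

lemma prefixGram_succ (t : Fin T) :
    prefixGram lam y ((t : ℕ) + 1) = prefixGram lam y t + vecMulVec (y t) (y t) := by
  have hfilter : univ.filter (fun s : Fin T => (s : ℕ) < t + 1)
      = insert t (univ.filter fun s : Fin T => (s : ℕ) < t) := by
    ext s
    simp only [mem_filter, mem_univ, true_and, mem_insert, Fin.ext_iff]
    omega
  rw [prefixGram, prefixGram, hfilter, sum_insert (by simp), add_comm (vecMulVec _ _), add_assoc]

lemma trace_vecMulVec_self_le {β : ℝ} {v : Fin d → ℝ} (hv : norm2 v ≤ β) :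
    (vecMulVec v v).trace ≤ β ^ 2 := by
  have htrace : (vecMulVec v v).trace = norm2 v ^ 2 := by
    rw [norm2, sq_sqrt (by positivity)]
    simp [trace, vecMulVec_apply, sq]
  rw [htrace]
  exact pow_le_pow_left₀ (sqrt_nonneg _) hv 2

lemma trace_prefixGram_le {β : ℝ} (hy : ∀ s, norm2 (y s) ≤ β) (n : ℕ) :
    (prefixGram lam y n).trace ≤ lam * d + β ^ 2 * T := by
  rw [prefixGram, trace_add, trace_smul, trace_one, trace_sum, Fintype.card_fin, smul_eq_mul]
  gcongr
  calc ∑ s ∈ univ.filter (fun s : Fin T => (s : ℕ) < n), (vecMulVec (y s) (y s)).trace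
      ≤ ∑ s, (vecMulVec (y s) (y s)).trace :=
        sum_le_sum_of_subset_of_nonneg (subset_univ _) fun s _ _ =>
          (posSemidef_vecMulVec_self (y s)).trace_nonneg
    _ ≤ ∑ _s : Fin T, β ^ 2 := sum_le_sum fun s _ => trace_vecMulVec_self_le (hy s)
    _ = β ^ 2 * T := by simp [mul_comm]

theorem sum_min_one_normV_prefixGram_inv_sq_le (hd : 0 < d) (hlam : 0 < lam) {β : ℝ}
    (hy : ∀ s, norm2 (y s) ≤ β) :
    ∑ t : Fin T, min 1 (normV (prefixGram lam y t)⁻¹ (y t)) ^ 2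
      ≤ 2 * d * log (1 + β ^ 2 * T / (lam * d)) := by
  have hd' : (0 : ℝ) < d := by exact_mod_cast hd
  have : Nonempty (Fin d) := Fin.pos_iff_nonempty.mp hd
  have hlogT : log (prefixGram lam y T).det ≤ d * log (lam * (1 + β ^ 2 * T / (lam * d))) := by
    have hamgm := (prefixGram_posDef hlam y T).log_det_le_card_mul_log_trace_div
      (by simpa using hd)
    rw [Fintype.card_fin] at hamgm
    refine hamgm.trans (mul_le_mul_of_nonneg_left (log_le_log ?_ ?_) hd'.le)
    · exact div_pos ((prefixGram_posDef hlam y T).trace_pos) hd'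
    · rw [div_le_iff₀ hd', mul_add, mul_one, mul_div_assoc', mul_div_mul_left _ _ hlam.ne',
        add_mul, div_mul_cancel₀ _ hd'.ne']
      exact trace_prefixGram_le hy T
  have hlog0 : log (prefixGram lam y 0).det = d * log lam := by
    rw [prefixGram_zero, det_smul, det_one, mul_one, Fintype.card_fin, log_pow]
  calc ∑ t : Fin T, min 1 (normV (prefixGram lam y t)⁻¹ (y t)) ^ 2
      ≤ 2 * (log (prefixGram lam y T).det - log (prefixGram lam y 0).det) :=
        sum_min_one_normV_inv_sq_le_log_det _ y (prefixGram_posDef hlam y) prefixGram_succ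
    _ ≤ 2 * d * log (1 + β ^ 2 * T / (lam * d)) := by
        rw [log_mul hlam.ne' (by positivity)] at hlogT
        linarith

end PrefixGram

section Bandit

variable {d K T : ℕ}

noncomputable def armContexts (x : Fin T → Fin d → ℝ) (a : Fin T → Fin K) (b : Fin K) :
    Fin T → Fin d → ℝ :=
  fun s => if a s = b then x s else 0

lemma design_eq_prefixGram (lam : ℝ) (x : Fin T → Fin d → ℝ) (a : Fin T → Fin K) (t : Fin T)
    (b : Fin K) : design lam x a t b = prefixGram lam (armContexts x a b) t := by
  rw [design, prefixGram, ← filter_filter, sum_filter]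
  congr 1
  refine sum_congr rfl fun s _ => ?_
  by_cases h : a s = b <;> simp [armContexts, h]

lemma sum_min_one_normV_design_inv_sq_le (hd : 0 < d) {lam β : ℝ} (hlam : 0 < lam)
    {x : Fin T → Fin d → ℝ} (hx : ∀ t, norm2 (x t) ≤ β) (a : Fin T → Fin K) :
    ∑ t, min 1 (normV (design lam x a t (a t))⁻¹ (x t)) ^ 2
      ≤ K * (2 * d * log (1 + β ^ 2 * T / (lam * d))) := by
  have harm : ∀ b, ∑ t with a t = b, min 1 (normV (design lam x a t (a t))⁻¹ (x t)) ^ 2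
      = ∑ t : Fin T,
          min 1 (normV (prefixGram lam (armContexts x a b) t)⁻¹ (armContexts x a b t)) ^ 2 := by
    intro b
    rw [sum_filter]
    refine sum_congr rfl fun t _ => ?_
    by_cases h : a t = b
    · simp [armContexts, h, design_eq_prefixGram]
    · simp [armContexts, h, normV_zero]
  have hnorm : ∀ b s, norm2 (armContexts x a b s) ≤ β := by
    intro b s
    by_cases h : a s = b
    · simpa [armContexts, h] using hx s
    · simpa [armContexts, h, norm2] using (sqrt_nonneg _).trans (hx s)
  calc ∑ t, min 1 (normV (design lam x a t (a t))⁻¹ (x t)) ^ 2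
      = ∑ b, ∑ t with a t = b, min 1 (normV (design lam x a t (a t))⁻¹ (x t)) ^ 2 :=
        (sum_fiberwise univ a _).symm
    _ ≤ ∑ _b : Fin K, 2 * d * log (1 + β ^ 2 * T / (lam * d)) := sum_le_sum fun b _ =>
        (harm b).trans_le (sum_min_one_normV_prefixGram_inv_sq_le hd hlam (hnorm b))
    _ = K * (2 * d * log (1 + β ^ 2 * T / (lam * d))) := by simp

end Bandit

section RoundRegret

variable {d : ℕ} {ι : Type*} {μ : ℝ → ℝ} {L : ℝ}

lemma sub_le_two_mul_of_abs_le_one (hL : 0 ≤ L) (hlip : ∀ s u : ℝ, |μ s - μ u| ≤ L * |s - u|)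
    {s u : ℝ} (hs : |s| ≤ 1) (hu : |u| ≤ 1) : μ s - μ u ≤ 2 * L :=
  calc μ s - μ u ≤ |μ s - μ u| := le_abs_self _
    _ ≤ L * |s - u| := hlip s u
    _ ≤ L * 2 := by gcongr; linarith [abs_sub s u]
    _ = 2 * L := mul_comm _ _

lemma sSup_sub_le_two_mul_min_one_normV_inv (hmono : Monotone μ) (hL : 0 ≤ L)
    (hlip : ∀ s u : ℝ, |μ s - μ u| ≤ L * |s - u|) {ρ : ℝ} (hρ : 1 ≤ ρ)
    {V : ι → Matrix (Fin d) (Fin d) ℝ} (hV : ∀ b, (V b).PosDef) {θs θhat : ι → Fin d → ℝ}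
    (hconf : ∀ b, normV (V b) (θhat b - θs b) ≤ ρ) {D : Set (Fin d → ℝ)}
    (hDθ : ∀ z ∈ D, ∀ b, |dotp z (θs b)| ≤ 1) {x θt : Fin d → ℝ} {a : ι} (hx : x ∈ D)
    (hθt : normV (V a) (θt - θhat a) ≤ ρ)
    (hopt : ∀ (b : ι) (z θ' : Fin d → ℝ), z ∈ D →
      normV (V b) (θ' - θhat b) ≤ ρ → dotp z θ' ≤ dotp x θt) :
    sSup ((fun p : ι × (Fin d → ℝ) => μ (dotp p.2 (θs p.1))) '' {p | p.2 ∈ D})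
        - μ (dotp x (θs a))
      ≤ 2 * L * ρ * min 1 (normV (V a)⁻¹ x) := by
  have hconf' : ∀ b, normV (V b) (θs b - θhat b) ≤ ρ := fun b =>
    normV_sub_rev (hV b).posSemidef (θs b) (θhat b) ▸ hconf b
  have hne : ((fun p : ι × (Fin d → ℝ) => μ (dotp p.2 (θs p.1))) '' {p | p.2 ∈ D}).Nonempty :=
    ⟨_, ⟨(a, x), hx, rfl⟩⟩
  have hoptimism : dotp x (θs a) ≤ dotp x θt := hopt a x (θs a) hx (hconf' a)
  have hgap : dotp x θt - dotp x (θs a) ≤ 2 * ρ * normV (V a)⁻¹ x :=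
    dotp_sub_le_two_mul_normV_inv (hV a) hθt (hconf' a) x
  rw [mul_min_of_nonneg _ _ (by positivity), mul_one, le_min_iff]
  constructor
  · have hsSup := csSup_le hne (Set.forall_mem_image.2 fun p hp => sub_le_iff_le_add.1
      (sub_le_two_mul_of_abs_le_one hL hlip (hDθ p.2 hp p.1) (hDθ x hx a)))
    nlinarith
  · have hsSup := csSup_le hne (Set.forall_mem_image.2 fun p hp =>
      hmono (hopt p.1 p.2 (θs p.1) hp (hconf' p.1)))
    have hlipx : μ (dotp x θt) - μ (dotp x (θs a)) ≤ L * (dotp x θt - dotp x (θs a)) := by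
      simpa [abs_of_nonneg (sub_nonneg.2 hoptimism)] using
        (le_abs_self _).trans (hlip (dotp x θt) (dotp x (θs a)))
    nlinarith

end RoundRegret

theorem glrb_recourse_regret_bound_general
    (d K T : ℕ) (hd : 1 ≤ d)
    (lam βX Lμ ρ : ℝ) (hlam : 0 < lam) (hL : 0 < Lμ) (hρ : 1 ≤ ρ)
    (μ : ℝ → ℝ) (hmono : Monotone μ)
    (hlip : ∀ s u : ℝ, |μ s - μ u| ≤ Lμ * |s - u|)
    (θs : Fin K → Fin d → ℝ)
    (D : Fin T → Set (Fin d → ℝ))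
    (hDb : ∀ t, ∀ z ∈ D t, norm2 z ≤ βX)
    (hDθ : ∀ t, ∀ z ∈ D t, ∀ b : Fin K, |dotp z (θs b)| ≤ 1)
    (x : Fin T → Fin d → ℝ) (a : Fin T → Fin K) (hx : ∀ t, x t ∈ D t)
    (θhat : Fin T → Fin K → Fin d → ℝ)
    (hconf : ∀ t b, normV (design lam x a t b) (θhat t b - θs b) ≤ ρ)
    (hopt : ∀ t, ∃ θt : Fin d → ℝ,
      normV (design lam x a t (a t)) (θt - θhat t (a t)) ≤ ρ ∧
      ∀ (b : Fin K) (z θ' : Fin d → ℝ), z ∈ D t →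
        normV (design lam x a t b) (θ' - θhat t b) ≤ ρ →
        dotp z θ' ≤ dotp (x t) θt) :
    ∑ t, (sSup ((fun p : Fin K × (Fin d → ℝ) => μ (dotp p.2 (θs p.1))) '' {p | p.2 ∈ D t})
          - μ (dotp (x t) (θs (a t))))
      ≤ 2 * Lμ * ρ
          * Real.sqrt (2 * d * K * T * Real.log (1 + βX ^ 2 * T / (lam * d))) := by
  set w : Fin T → ℝ := fun t => min 1 (normV (design lam x a t (a t))⁻¹ (x t))
  have hpotential : ∑ t, w t ^ 2 ≤ K * (2 * d * log (1 + βX ^ 2 * T / (lam * d))) :=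
    sum_min_one_normV_design_inv_sq_le hd hlam (fun t => hDb t _ (hx t)) a
  calc _ ≤ ∑ t, 2 * Lμ * ρ * w t := sum_le_sum fun t _ => by
        obtain ⟨θt, hθt, hoptt⟩ := hopt t
        exact sSup_sub_le_two_mul_min_one_normV_inv hmono hL.le hlip hρ
          (fun b => design_eq_prefixGram lam x a t b ▸ prefixGram_posDef hlam _ _) (hconf t)
          (hDθ t) (hx t) hθt hoptt
    _ = 2 * Lμ * ρ * ∑ t, w t := (mul_sum _ _ _).symm
    _ ≤ 2 * Lμ * ρ * √(T * ∑ t, w t ^ 2) := by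
        gcongr; simpa using sum_le_sqrt_card_mul_sum_sq w
    _ ≤ _ := by
        gcongr 2 * Lμ * ρ * √?_
        exact (mul_le_mul_of_nonneg_left hpotential (Nat.cast_nonneg T)).trans_eq (by ring)

/-- Recourse regret bound for the GLRB algorithm (deterministic core): on the event
that every true arm parameter lies in its confidence ellipsoid of radius `ρ`, if each
round's choice is optimistic over the feasible context set `D_t`, arms, and confidence
ellipsoids, then the cumulative recourse regret w.r.t. the generalized linear reward
`μ(⟨x, θ*_a⟩)` is at most `2 L_μ ρ √(2 d K T · log(1 + β_X² T/(λ d)))`. -/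
theorem glrb_recourse_regret_bound
    (d K T : ℕ) (hd : 1 ≤ d) (hK : 1 ≤ K) (hT : 1 ≤ T)
    (lam βX Lμ ρ : ℝ) (hlam : 0 < lam) (hβ : 0 < βX) (hL : 0 < Lμ) (hρ : 1 ≤ ρ)
    (μ : ℝ → ℝ) (hmono : Monotone μ)
    (hlip : ∀ s u : ℝ, |μ s - μ u| ≤ Lμ * |s - u|)
    (θs : Fin K → Fin d → ℝ)
    (D : Fin T → Set (Fin d → ℝ)) (hDne : ∀ t, (D t).Nonempty)
    (hDb : ∀ t, ∀ z ∈ D t, norm2 z ≤ βX)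
    (hDθ : ∀ t, ∀ z ∈ D t, ∀ b : Fin K, |dotp z (θs b)| ≤ 1)
    (x : Fin T → Fin d → ℝ) (a : Fin T → Fin K) (hx : ∀ t, x t ∈ D t)
    (θhat : Fin T → Fin K → Fin d → ℝ)
    (hconf : ∀ t b, normV (design lam x a t b) (θhat t b - θs b) ≤ ρ)
    (hopt : ∀ t, ∃ θt : Fin d → ℝ,
      normV (design lam x a t (a t)) (θt - θhat t (a t)) ≤ ρ ∧
      ∀ (b : Fin K) (z θ' : Fin d → ℝ), z ∈ D t →
        normV (design lam x a t b) (θ' - θhat t b) ≤ ρ →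
        dotp z θ' ≤ dotp (x t) θt) :
    ∑ t, (sSup ((fun p : Fin K × (Fin d → ℝ) => μ (dotp p.2 (θs p.1))) '' {p | p.2 ∈ D t})
          - μ (dotp (x t) (θs (a t))))
      ≤ 2 * Lμ * ρ
          * Real.sqrt (2 * d * K * T * Real.log (1 + βX ^ 2 * T / (lam * d))) :=
  glrb_recourse_regret_bound_general d K T hd lam βX Lμ ρ hlam hL hρ μ hmono hlip θs D hDb hDθ x a
    hx θhat hconf hopt
end
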